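/- Let (X, μ) be a measure space, p ∈ (1, ∞), and g ∈ L^p(X) with ‖g‖_{L^p} ≤ C. Then for every k ∈ ℕ there exists λ_k ∈ [2^{2^k}, 2^{2^{k+1}}] such that λ_k^p · μ({x : |g(x)| > λ_k}) ≤ C^p / (ln 2 · p · 2^k). -/

import Mathlib

open MeasureTheory

/-!
By the layer-cake formula, `‖g‖_p^p = p ∫₀^∞ t^{p-1} μ{|g| > t} dt ≥ p ∫_a^b t^p μ{|g| > t} dt/t`,
so `t^p μ{|g| > t}` cannot exceed `‖g‖_p^p / (p log (b/a))` on all of `(a, b]`.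
For `a = 2^{2^k}`, `b = 2^{2^{k+1}}` one has `log (b/a) = 2^k log 2`.
-/

open Set Real

theorem exists_le_of_setLIntegral_le {α : Type*} [MeasurableSpace α] {μ : Measure α}
    {f g : α → ENNReal} {s : Set α} (hs : MeasurableSet s) (hμs : μ s ≠ 0)
    (hg : Measurable g) (hfi : ∫⁻ x in s, f x ∂μ ≠ ⊤)
    (hle : ∫⁻ x in s, g x ∂μ ≤ ∫⁻ x in s, f x ∂μ) : ∃ x ∈ s, g x ≤ f x := by
  by_contra! hlt
  exact (setLIntegral_strict_mono hs hμs hg hfi (ae_of_all _ hlt)).not_ge hle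

theorem setLIntegral_Ioc_ofReal_div {a b M : ℝ} (ha : 0 < a) (hab : a ≤ b) (hM : 0 ≤ M) :
    ∫⁻ t in Ioc a b, ENNReal.ofReal (M / t) = ENNReal.ofReal (M * log (b / a)) := by
  have hpos : ∀ t ∈ Icc a b, 0 < t := fun t ht => ha.trans_le ht.1
  have hint : IntegrableOn (fun t => M / t) (Ioc a b) :=
    (continuousOn_const.div continuousOn_id fun t ht => (hpos t ht).ne').integrableOn_Icc
      |>.mono_set Ioc_subset_Icc_self
  rw [← ofReal_integral_eq_lintegral_ofReal hint, ← intervalIntegral.integral_of_le hab]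
  · simp_rw [div_eq_mul_inv M, intervalIntegral.integral_const_mul,
      integral_inv_of_pos ha (ha.trans_le hab)]
  · filter_upwards [self_mem_ae_restrict measurableSet_Ioc] with t ht
    exact div_nonneg hM (hpos t (Ioc_subset_Icc_self ht)).le

theorem rpow_mul_toReal_le_of_mul_ofReal_rpow_le {m : ENNReal} {t p M : ℝ} (ht : 0 < t)
    (hM : 0 ≤ M) (h : m * ENNReal.ofReal (t ^ (p - 1)) ≤ ENNReal.ofReal (M / t)) :
    t ^ p * m.toReal ≤ M := by
  have h' := ENNReal.toReal_mono ENNReal.ofReal_ne_top h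
  rw [ENNReal.toReal_mul, ENNReal.toReal_ofReal (by positivity),
    ENNReal.toReal_ofReal (div_nonneg hM ht.le), le_div_iff₀ ht] at h'
  calc t ^ p * m.toReal = m.toReal * t ^ (p - 1) * t := by
        rw [rpow_sub ht, rpow_one]; field_simp
    _ ≤ M := h'

theorem exists_mem_Ioc_rpow_mul_measure_le {α : Type*} [MeasurableSpace α] (μ : Measure α)
    {g : α → ℝ} (hg : AEMeasurable g μ) {p K a b : ℝ} (hp : 0 < p) (hK : 0 ≤ K) (ha : 0 < a)
    (hab : a < b) (hint : ∫⁻ x, ENNReal.ofReal (|g x| ^ p) ∂μ ≤ ENNReal.ofReal K) :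
    ∃ t ∈ Ioc a b, t ^ p * (μ {x | t < |g x|}).toReal ≤ K / (p * log (b / a)) := by
  set M := K / (p * log (b / a))
  have hM : 0 ≤ M := div_nonneg hK (mul_pos hp (log_pos ((one_lt_div ha).2 hab))).le
  set G : ℝ → ENNReal := fun t => μ {x | t < |g x|} * ENNReal.ofReal (t ^ (p - 1))
  have hGmeas : Measurable G := by
    refine .mul (Antitone.measurable fun s t hst => measure_mono fun x hx => hst.trans_lt hx) ?_
    fun_prop
  have hKeq : K = p * (M * log (b / a)) := by
    have : log (b / a) ≠ 0 := (log_pos ((one_lt_div ha).2 hab)).ne'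
    simp only [M]
    field_simp
  have hp' : ENNReal.ofReal p ≠ 0 := by simpa using hp
  have hGle : ∫⁻ t in Ioc a b, G t ≤ ∫⁻ t in Ioc a b, ENNReal.ofReal (M / t) := by
    refine (ENNReal.mul_le_mul_iff_right hp' ENNReal.ofReal_ne_top).1 ?_
    calc ENNReal.ofReal p * ∫⁻ t in Ioc a b, G t
        ≤ ENNReal.ofReal p * ∫⁻ t in Ioi 0, G t := by
          gcongr
          exact fun t ht => ha.trans ht.1
      _ = ∫⁻ x, ENNReal.ofReal (|g x| ^ p) ∂μ :=
          (lintegral_rpow_eq_lintegral_meas_lt_mul μ (ae_of_all _ fun x => abs_nonneg _)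
            hg.abs hp).symm
      _ ≤ ENNReal.ofReal p * ∫⁻ t in Ioc a b, ENNReal.ofReal (M / t) := by
          rwa [setLIntegral_Ioc_ofReal_div ha hab.le hM, ← ENNReal.ofReal_mul hp.le, ← hKeq]
  obtain ⟨t, ht, hGt⟩ := exists_le_of_setLIntegral_le measurableSet_Ioc
    (by simpa using hab) hGmeas
    (by rw [setLIntegral_Ioc_ofReal_div ha hab.le hM]; exact ENNReal.ofReal_ne_top) hGle
  exact ⟨t, ht, rpow_mul_toReal_le_of_mul_ofReal_rpow_le (ha.trans ht.1) hM hGt⟩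

theorem log_two_pow_two_pow_succ_div (k : ℕ) :
    log ((2 : ℝ) ^ 2 ^ (k + 1) / 2 ^ 2 ^ k) = 2 ^ k * log 2 := by
  rw [pow_succ, mul_two, pow_add, mul_div_cancel_right₀ _ (by positivity), log_pow]
  push_cast
  ring

/-- Dyadic level selection: if `‖g‖_{L^p} ≤ C` then for each `k` there is
`λ_k ∈ [2^{2^k}, 2^{2^{k+1}}]` with `λ_k^p μ({|g| > λ_k}) ≤ C^p/(ln 2 · p · 2^k)`. -/
theorem stmt5 {X : Type*} [MeasureSpace X] (p C : ℝ) (hp : 1 < p) (hC : 0 < C)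
    (g : X → ℝ) (hmeas : Measurable g)
    (hg : (∫⁻ x, ENNReal.ofReal (|g x| ^ p)) ≤ ENNReal.ofReal (C ^ p)) :
    ∀ k : ℕ, ∃ l : ℝ, l ∈ Set.Icc ((2 : ℝ) ^ (2 ^ k)) ((2 : ℝ) ^ (2 ^ (k + 1))) ∧
      l ^ p * (volume {x | l < |g x|}).toReal ≤ C ^ p / (Real.log 2 * p * 2 ^ k) := by
  intro k
  have hab : (2 : ℝ) ^ 2 ^ k < 2 ^ 2 ^ (k + 1) :=
    pow_lt_pow_right₀ one_lt_two (Nat.pow_lt_pow_right one_lt_two k.lt_succ_self)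
  obtain ⟨l, hl, hle⟩ := exists_mem_Ioc_rpow_mul_measure_le volume hmeas.aemeasurable
    (by linarith) (rpow_nonneg hC.le p) (by positivity) hab hg
  refine ⟨l, Ioc_subset_Icc_self hl, ?_⟩
  rwa [log_two_pow_two_pow_succ_div, show p * (2 ^ k * log 2) = log 2 * p * 2 ^ k by ring]
    at hle
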